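/- arXiv:2403.03530 — 5 statements merged into one kernel-verified Lean document; each statement's English description precedes it below -/
import Mathlib

section
/- For every non-zero boolean function f : {0,1}^n → {0,1}, D_ave(f) ≤ log₂(wt(f)) + 2. -/
/-- Decision trees over `n` boolean variables. -/
inductive DTree (n : ℕ) : Type where
  | leaf : Bool → DTree n
  | node : Fin n → DTree n → DTree n → DTree n

namespace DTree

/-- Evaluate a decision tree on an input. -/
def eval {n : ℕ} : DTree n → (Fin n → Bool) → Bool
  | leaf b, _ => b
  | node i t0 t1, x => if x i then eval t1 x else eval t0 x

/-- Number of queries made on input `x`. -/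
def cost {n : ℕ} : DTree n → (Fin n → Bool) → ℕ
  | leaf _, _ => 0
  | node i t0 t1, x => 1 + (if x i then cost t1 x else cost t0 x)

/-- Depth of a decision tree. -/
def depth {n : ℕ} : DTree n → ℕ
  | leaf _ => 0
  | node _ t0 t1 => 1 + max (depth t0) (depth t1)

end DTree

/-- `T` computes `f` with zero error. -/
def Computes {n : ℕ} (T : DTree n) (f : (Fin n → Bool) → Bool) : Prop :=
  ∀ x, T.eval x = f x

/-- Average cost of a decision tree under the uniform distribution. -/
noncomputable def avgCost {n : ℕ} (T : DTree n) : ℝ :=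
  (∑ x : Fin n → Bool, (T.cost x : ℝ)) / 2 ^ n

/-- Average-case deterministic query complexity under the uniform distribution. -/
noncomputable def Dave {n : ℕ} (f : (Fin n → Bool) → Bool) : ℝ :=
  sInf {c : ℝ | ∃ T : DTree n, Computes T f ∧ avgCost T = c}

/-- Worst-case deterministic query complexity. -/
noncomputable def Dworst {n : ℕ} (f : (Fin n → Bool) → Bool) : ℕ :=
  sInf {d : ℕ | ∃ T : DTree n, Computes T f ∧ T.depth = d}

/-- The weight of a boolean function: the number of inputs mapped to `true`. -/
def wt {n : ℕ} (f : (Fin n → Bool) → Bool) : ℕ :=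
  (Finset.univ.filter fun x : Fin n → Bool => f x = true).card

/-- `S` is a certificate of `f` on input `x`. -/
def IsCert {n : ℕ} (f : (Fin n → Bool) → Bool) (x : Fin n → Bool) (S : Finset (Fin n)) : Prop :=
  ∀ y : Fin n → Bool, (∀ i ∈ S, y i = x i) → f y = f x

/-- Certificate complexity of `f` on input `x`. -/
noncomputable def certC {n : ℕ} (f : (Fin n → Bool) → Bool) (x : Fin n → Bool) : ℕ :=
  sInf {k : ℕ | ∃ S : Finset (Fin n), IsCert f x S ∧ S.card = k}

/-- The weight of the subfunction `f|ρ`, where `ρ : Fin n → Option Bool` is a restriction: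
the number of inputs consistent with `ρ` on which `f` outputs `true`. -/
def wtR {n : ℕ} (f : (Fin n → Bool) → Bool) (ρ : Fin n → Option Bool) : ℕ :=
  (Finset.univ.filter fun x : Fin n → Bool =>
    f x = true ∧ ∀ i : Fin n, ∀ b : Bool, ρ i = some b → x i = b).card

/-- Number of coordinates fixed by a restriction. -/
def suppCard {n : ℕ} (ρ : Fin n → Option Bool) : ℕ :=
  (Finset.univ.filter fun i : Fin n => (ρ i).isSome).card

/-- The restriction given by the first `j` steps of a decision-tree path `L`. -/
def PathRho {n : ℕ} (L : List (Fin n × Bool)) (j : ℕ) : Fin n → Option Bool :=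
  fun i => (L.take j).lookup i

/-- The path `L` is `δ`-parity with respect to `f`. -/
def DeltaParityPath {n : ℕ} (f : (Fin n → Bool) → Bool) (δ : ℝ)
    (L : List (Fin n × Bool)) : Prop :=
  ∀ j : ℕ, 1 ≤ j → j ≤ L.length →
    (1/2) * (1 - δ) * (wtR f (PathRho L (j-1)) : ℝ) ≤ (wtR f (PathRho L j) : ℝ) ∧
    (wtR f (PathRho L j) : ℝ) ≤ (1/2) * (1 + δ) * (wtR f (PathRho L (j-1)) : ℝ)

/-- `f` is a `(t,δ)`-parity function: every path of length at most `t` is δ-parity. -/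
def ParityFun {n : ℕ} (f : (Fin n → Bool) → Bool) (t : ℕ) (δ : ℝ) : Prop :=
  ∀ L : List (Fin n × Bool), (L.map Prod.fst).Nodup → L.length ≤ t → DeltaParityPath f δ L

/-- The subfunction `f|ρ`, viewed as a function on the full cube. -/
def restrictFun {n : ℕ} (f : (Fin n → Bool) → Bool) (ρ : Fin n → Option Bool) :
    (Fin n → Bool) → Bool :=
  fun x => f fun i => (ρ i).getD (x i)

/-- Probability mass of the restriction `ρ` under the `p`-random restriction `R_p`. -/
noncomputable def rpMass {n : ℕ} (p : ℝ) (ρ : Fin n → Option Bool) : ℝ :=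
  ∏ i : Fin n, if (ρ i).isSome then (1 - p) / 2 else p

/-- `f` is `λ`-critical. -/
def IsCritical {n : ℕ} (lam : ℝ) (f : (Fin n → Bool) → Bool) : Prop :=
  ∀ p : ℝ, 0 ≤ p → p ≤ 1 → ∀ t : ℕ,
    (∑ ρ : Fin n → Option Bool,
      if t ≤ Dworst (restrictFun f ρ) then rpMass p ρ else 0) ≤ (p * lam) ^ t


/-!
Query the variables in a fixed order and stop as soon as the remaining subfunction is constant.
If the subfunction on the current subcube has `w ≥ 1` true inputs, at most `log₂ w + 2` further
queries are made on average. Inductively, a query splits `w = w₀ + w₁`; when both parts are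
positive, `1 + (log₂ w₀ + log₂ w₁) / 2 ≤ log₂ w` is AM–GM, and when `w₀ = 0` the bound
`1 + (log₂ w + 2) / 2 ≤ log₂ w + 2` only needs `w ≥ 1`.
-/

open Finset Function

lemma DependsOn.comp_update_of_cons {ι β : Type*} {α : ι → Type*} [DecidableEq ι]
    {g : (∀ i, α i) → β} {i : ι} {L : List ι} (hg : DependsOn g {j | j ∈ i :: L}) (b : α i) :
    DependsOn (fun x => g (Function.update x i b)) {j | j ∈ L} := by
  intro x y hxy
  refine hg fun j hj => ?_
  rcases eq_or_ne j i with rfl | hne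
  · simp
  · simp only [update_of_ne hne]
    exact hxy j ((List.mem_cons.1 hj).resolve_left hne)

lemma sum_comp_update_false_add_sum_comp_update_true {ι M : Type*} [Fintype ι] [DecidableEq ι]
    [AddCommMonoid M] (i : ι) (h : (ι → Bool) → M) :
    ∑ x, h (update x i false) + ∑ x, h (update x i true) = 2 • ∑ x, h x := by
  let e := Equiv.funSplitAt i Bool
  have hupdate : ∀ c b y, update (e.symm (c, y)) i b = e.symm (b, y) := by
    intro c b y
    funext j
    by_cases hj : j = i
    · subst hj; simp [e]
    · simp [e, hj]
  simp only [← e.symm.sum_comp (fun x => h (update x i _)), ← e.symm.sum_comp h,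
    Fintype.sum_prod_type, hupdate, Fintype.sum_bool, sum_const, card_univ, Fintype.card_bool]
  abel

lemma logb_two_two_mul {a : ℝ} (ha : 0 < a) : Real.logb 2 (2 * a) = 1 + Real.logb 2 a := by
  rw [Real.logb_mul two_ne_zero ha.ne', Real.logb_self_eq_one one_lt_two]

lemma logb_two_add_logb_two_le {a b : ℝ} (ha : 0 < a) (hb : 0 < b) :
    Real.logb 2 a + Real.logb 2 b ≤ 2 * Real.logb 2 ((a + b) / 2) := by
  rw [← Real.logb_mul ha.ne' hb.ne', ← Nat.cast_two, ← Real.logb_pow, Nat.cast_two]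
  exact Real.logb_le_logb_of_le one_lt_two (by positivity) (by nlinarith [sq_nonneg (a - b)])

/-- `w_b` and `A_b` are the weights and average costs of the two children of a query, `d` is
their codimension. -/
lemma one_add_avg_add_le_logb_two_add_two {W w₀ w₁ A₀ A₁ d : ℝ} (hW : 0 < W)
    (hw : w₀ + w₁ = 2 * W) (hd : d - 1 ≤ Real.logb 2 W)
    (h₀ : w₀ = 0 ∧ A₀ = 0 ∨ 0 < w₀ ∧ A₀ + d ≤ Real.logb 2 w₀ + 2)
    (h₁ : w₁ = 0 ∧ A₁ = 0 ∨ 0 < w₁ ∧ A₁ + d ≤ Real.logb 2 w₁ + 2) :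
    1 + (A₀ + A₁) / 2 + (d - 1) ≤ Real.logb 2 W + 2 := by
  rcases h₀ with ⟨rfl, rfl⟩ | ⟨p₀, h₀⟩ <;> rcases h₁ with ⟨rfl, rfl⟩ | ⟨p₁, h₁⟩
  · linarith
  · rw [zero_add] at hw
    rw [hw, logb_two_two_mul hW] at h₁
    linarith
  · rw [add_zero] at hw
    rw [hw, logb_two_two_mul hW] at h₀
    linarith
  · have := logb_two_add_logb_two_le p₀ p₁
    rw [hw, mul_div_cancel_left₀ _ two_ne_zero] at this
    linarith

variable {n : ℕ}

lemma wt_pos_iff {f : (Fin n → Bool) → Bool} : 0 < wt f ↔ ∃ x, f x = true := by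
  simp [wt, Finset.card_pos, Finset.filter_nonempty_iff]

lemma wt_comp_update_false_add_wt_comp_update_true (f : (Fin n → Bool) → Bool) (i : Fin n) :
    wt (fun x => f (update x i false)) + wt (fun x => f (update x i true)) = 2 * wt f := by
  have := sum_comp_update_false_add_sum_comp_update_true i fun x => if f x = true then 1 else 0
  rw [nsmul_eq_mul] at this
  simp only [wt, card_filter]
  exact this

lemma sub_length_le_logb_wt {g : (Fin n → Bool) → Bool} {L : List (Fin n)}
    (hg : DependsOn g {i | i ∈ L}) (hpos : 0 < wt g) :
    (n : ℝ) - L.length ≤ Real.logb 2 (wt g) := by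
  obtain ⟨x, hx⟩ := wt_pos_iff.1 hpos
  induction L generalizing g with
  | nil =>
    have hwt : wt g = 2 ^ n := by
      simp [wt, fun y => (hg (x := y) (y := x) (by simp)).trans hx]
    simp [hwt, Real.logb_pow]
  | cons i L ih =>
    obtain ⟨b, hb, hbwt⟩ : ∃ b, g (update x i b) = true ∧
        wt (fun y => g (update y i b)) ≤ 2 * wt g := by
      have := wt_comp_update_false_add_wt_comp_update_true g i
      refine ⟨x i, by rwa [update_eq_self], ?_⟩
      cases x i <;> omega
    have hbpos : 0 < wt (fun y => g (update y i b)) := wt_pos_iff.2 ⟨x, hb⟩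
    have hmono := Real.logb_le_logb_of_le one_lt_two (Nat.cast_pos.2 hbpos) (y := 2 * wt g)
      (by exact_mod_cast hbwt)
    rw [logb_two_two_mul (Nat.cast_pos.2 hpos)] at hmono
    have := ih (hg.comp_update_of_cons b) hbpos hb
    simp only [List.length_cons, Nat.cast_add, Nat.cast_one]
    linarith

@[simp]
lemma avgCost_leaf (b : Bool) : avgCost (DTree.leaf b : DTree n) = 0 := by
  simp [avgCost, DTree.cost]

lemma avgCost_node {i : Fin n} {T₀ T₁ : DTree n}
    (h₀ : ∀ x c, T₀.cost (update x i c) = T₀.cost x)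
    (h₁ : ∀ x c, T₁.cost (update x i c) = T₁.cost x) :
    avgCost (DTree.node i T₀ T₁) = 1 + (avgCost T₀ + avgCost T₁) / 2 := by
  have hsum := sum_comp_update_false_add_sum_comp_update_true i
    fun x => ((DTree.node i T₀ T₁).cost x : ℝ)
  simp only [DTree.cost, update_self, h₀, h₁, Bool.false_eq_true, if_false, if_true] at hsum
  simp only [avgCost, DTree.cost]
  push_cast at hsum ⊢
  simp only [sum_add_distrib, nsmul_eq_mul, sum_const, card_univ, Fintype.card_fun,
    Fintype.card_bool, Fintype.card_fin] at hsum ⊢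
  field_simp
  push_cast at hsum ⊢
  linarith

lemma Dave_le_avgCost {f : (Fin n → Bool) → Bool} {T : DTree n} (hT : Computes T f) :
    Dave f ≤ avgCost T :=
  csInf_le ⟨0, by rintro c ⟨T', -, rfl⟩; unfold avgCost; positivity⟩ ⟨T, hT, rfl⟩

namespace DTree

def queryUntilConst : ((Fin n → Bool) → Bool) → List (Fin n) → DTree n
  | g, [] => leaf (g fun _ => false)
  | g, i :: L =>
    if ∀ x, g x = g fun _ => false then leaf (g fun _ => false)
    else node i (queryUntilConst (fun x => g (Function.update x i false)) L)
      (queryUntilConst (fun x => g (Function.update x i true)) L)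

lemma eval_queryUntilConst {g : (Fin n → Bool) → Bool} {L : List (Fin n)}
    (hg : DependsOn g {i | i ∈ L}) (x : Fin n → Bool) : (queryUntilConst g L).eval x = g x := by
  induction L generalizing g with
  | nil => exact hg (by simp)
  | cons i L ih =>
    rw [queryUntilConst]
    split_ifs with hconst
    · exact (hconst x).symm
    · simp only [eval, ih (hg.comp_update_of_cons _)]
      split_ifs with hx
      · rw [update_eq_self_iff.2 hx.symm]
      · rw [update_eq_self_iff.2 (Bool.eq_false_iff.2 hx).symm]

lemma cost_queryUntilConst_update {g : (Fin n → Bool) → Bool} {L : List (Fin n)} {i : Fin n}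
    (hi : i ∉ L) (x : Fin n → Bool) (c : Bool) :
    (queryUntilConst g L).cost (update x i c) = (queryUntilConst g L).cost x := by
  induction L generalizing g with
  | nil => rfl
  | cons j L ih =>
    have hji : j ≠ i := fun h => hi (h ▸ List.mem_cons_self)
    rw [queryUntilConst]
    split_ifs
    · rfl
    · simp [cost, update_of_ne hji, ih (fun h => hi (List.mem_cons_of_mem _ h))]

lemma queryUntilConst_eq_leaf {g : (Fin n → Bool) → Bool} (hg : ∀ x, g x = false)
    (L : List (Fin n)) : queryUntilConst g L = leaf false := by
  cases L <;> simp [queryUntilConst, hg]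

/-- `wt g` counts true inputs on the whole cube, so `logb 2 (wt g) - (n - L.length)` is `log₂` of
the number of true inputs of `g` on a subcube of the free coordinates `L`. -/
lemma avgCost_queryUntilConst_add_le {g : (Fin n → Bool) → Bool} {L : List (Fin n)}
    (hL : L.Nodup) (hg : DependsOn g {i | i ∈ L}) (hpos : 0 < wt g) :
    avgCost (queryUntilConst g L) + ((n : ℝ) - L.length) ≤ Real.logb 2 (wt g) + 2 := by
  induction L generalizing g with
  | nil =>
    have hlow := sub_length_le_logb_wt hg hpos
    simp only [queryUntilConst, avgCost_leaf] at hlow ⊢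
    linarith
  | cons i L ih =>
    have hlow := sub_length_le_logb_wt hg hpos
    obtain ⟨hi, hL⟩ := List.nodup_cons.1 hL
    have hchild : ∀ b, let g' := fun y => g (update y i b)
        (wt g' : ℝ) = 0 ∧ avgCost (queryUntilConst g' L) = 0 ∨
        0 < (wt g' : ℝ) ∧
          avgCost (queryUntilConst g' L) + ((n : ℝ) - L.length) ≤ Real.logb 2 (wt g') + 2 := by
      intro b g'
      rcases Nat.eq_zero_or_pos (wt g') with h0 | h0
      · refine .inl ⟨by simp [h0], ?_⟩
        rw [queryUntilConst_eq_leaf, avgCost_leaf]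
        simpa [g', wt, Finset.card_eq_zero, Finset.filter_eq_empty_iff] using h0
      · exact .inr ⟨Nat.cast_pos.2 h0, ih hL (hg.comp_update_of_cons b) h0⟩
    rw [queryUntilConst]
    split_ifs
    · simp only [avgCost_leaf, List.length_cons, Nat.cast_add, Nat.cast_one] at hlow ⊢
      linarith
    rw [avgCost_node (cost_queryUntilConst_update hi) (cost_queryUntilConst_update hi)]
    simp only [List.length_cons, Nat.cast_add, Nat.cast_one] at hlow ⊢
    have hsplit := wt_comp_update_false_add_wt_comp_update_true g i
    have := one_add_avg_add_le_logb_two_add_two (Nat.cast_pos.2 hpos)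
      (by exact_mod_cast hsplit) (by linarith) (hchild false) (hchild true)
    linarith

end DTree

theorem stmt1 (n : ℕ) (f : (Fin n → Bool) → Bool) (hf : ∃ x, f x = true) :
    Dave f ≤ Real.logb 2 (wt f) + 2 := by
  have hdep : DependsOn f {i | i ∈ List.finRange n} := by
    simpa using dependsOn_univ f
  have hcost := DTree.avgCost_queryUntilConst_add_le (List.nodup_finRange n) hdep
    (wt_pos_iff.2 hf)
  rw [List.length_finRange, sub_self, add_zero] at hcost
  exact (Dave_le_avgCost (DTree.eval_queryUntilConst hdep)).trans hcost
end

section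
/- For every boolean function f : {0,1}^n → {0,1} with n ≥ 2 and wt(f) < log₂ n, D_ave(f) ≤ 5. -/
/-!
Let `A` be the set of `1`-inputs and `w = |A|`. Query coordinates adaptively, keeping the set of
elements of `A` consistent with the answers so far, and stop as soon as it is empty. Querying a
coordinate on which all of `A` agrees costs one query and ends the run with probability `1/2`;
any other query splits `A` into two smaller nonempty parts. Induction on the set of unqueried
coordinates (`c` of them) bounds the expected number of queries by
`4 - 4 / 2 ^ w + 2 ^ 2 ^ w / 2 ^ (c + 2)`; the last term pays for running out of useful
coordinates. Prefer constant coordinates, then one of two coordinates that are equal or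
complementary on `A` (after querying it the other one is constant). A plain split is needed only
when the unqueried coordinates have pairwise distinct patterns on `A` up to complement, and then
`c < 2 ^ (w - 1)` by pigeonhole. When `2 ^ w < n` the bound is at most `4 + 1/8`.
-/

open Finset

theorem sum_ite_apply_eq_half {n : ℕ} (i : Fin n) {F G : (Fin n → Bool) → ℝ}
    (hF : ∀ x b, F (Function.update x i b) = F x)
    (hG : ∀ x b, G (Function.update x i b) = G x) :
    ∑ x, (if x i then F x else G x) = (∑ x, F x + ∑ x, G x) / 2 := by
  let flip : (Fin n → Bool) → (Fin n → Bool) := fun x => Function.update x i (!x i)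
  have hflip : Function.Involutive flip := fun x => by simp [flip]
  have hsum : ∑ x, (if flip x i then F (flip x) else G (flip x))
      = ∑ x, (if x i then F x else G x) :=
    Equiv.sum_comp hflip.toPerm fun x => if x i then F x else G x
  have hpair : ∀ x, ((if x i then F x else G x) + if flip x i then F (flip x) else G (flip x))
      = F x + G x := by
    intro x
    cases hx : x i <;> simp [flip, hx, hF, hG, add_comm]
  have := sum_congr rfl fun x (_ : x ∈ univ) => hpair x
  rw [sum_add_distrib, sum_add_distrib, hsum] at this
  linarith

namespace DTree

variable {n : ℕ}

def vars : DTree n → Finset (Fin n)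
  | leaf _ => ∅
  | node i t0 t1 => insert i (vars t0 ∪ vars t1)

theorem cost_update_of_notMem_vars {t : DTree n} {i : Fin n} (h : i ∉ t.vars)
    (x : Fin n → Bool) (b : Bool) : t.cost (Function.update x i b) = t.cost x := by
  induction t with
  | leaf => rfl
  | node j t0 t1 ih0 ih1 =>
    simp only [vars, mem_insert, mem_union, not_or] at h
    obtain ⟨hij, h0, h1⟩ := h
    simp only [cost, Function.update_of_ne (Ne.symm hij), ih0 h0, ih1 h1]

@[simp]
theorem avgCost_leaf (b : Bool) : avgCost (leaf b : DTree n) = 0 := by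
  simp [avgCost, cost]

theorem avgCost_node {i : Fin n} {t0 t1 : DTree n} (h0 : i ∉ t0.vars) (h1 : i ∉ t1.vars) :
    avgCost (node i t0 t1) = 1 + (avgCost t0 + avgCost t1) / 2 := by
  have hsum : ∑ x, ((node i t0 t1).cost x : ℝ)
      = 2 ^ n + (∑ x, (t1.cost x : ℝ) + ∑ x, (t0.cost x : ℝ)) / 2 := by
    simp only [cost, Nat.cast_add, Nat.cast_one, Nat.cast_ite, sum_add_distrib]
    rw [sum_ite_apply_eq_half i (by simp [cost_update_of_notMem_vars h1])
      (by simp [cost_update_of_notMem_vars h0])]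
    simp
  rw [avgCost, avgCost, avgCost, hsum]
  field_simp
  ring

end DTree

open DTree

theorem dave_le_avgCost {n : ℕ} {f : (Fin n → Bool) → Bool} {T : DTree n}
    (hT : Computes T f) : Dave f ≤ avgCost T :=
  csInf_le ⟨0, by rintro _ ⟨T', -, rfl⟩; unfold avgCost; positivity⟩ ⟨T, hT, rfl⟩

section Coordinates

variable {n : ℕ}

def IsConstAt (A : Finset (Fin n → Bool)) (i : Fin n) : Prop :=
  ∃ v, ∀ a ∈ A, a i = v

def IsXorConstAt (A : Finset (Fin n → Bool)) (i j : Fin n) : Prop :=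
  ∃ v, ∀ a ∈ A, xor (a i) (a j) = v

theorem IsXorConstAt.isConstAt_filter {A : Finset (Fin n → Bool)} {i j : Fin n}
    (h : IsXorConstAt A i j) (b : Bool) : IsConstAt (A.filter (· i = b)) j := by
  obtain ⟨v, hv⟩ := h
  refine ⟨xor b v, fun a ha => ?_⟩
  rw [mem_filter] at ha
  rw [← ha.2, ← hv a ha.1, ← Bool.xor_assoc, Bool.xor_self, Bool.false_xor]

theorem filter_nonempty_of_not_isConstAt {A : Finset (Fin n → Bool)} {i : Fin n}
    (h : ¬ IsConstAt A i) (b : Bool) : (A.filter (· i = b)).Nonempty := by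
  by_contra hb
  refine h ⟨!b, fun a ha => ?_⟩
  rw [not_nonempty_iff_eq_empty, filter_eq_empty_iff] at hb
  simpa [Bool.eq_not] using hb ha

theorem card_filter_lt_of_not_isConstAt {A : Finset (Fin n → Bool)} {i : Fin n}
    (h : ¬ IsConstAt A i) (b : Bool) : (A.filter (· i = b)).card < A.card := by
  obtain ⟨a, ha⟩ := filter_nonempty_of_not_isConstAt h (!b)
  rw [mem_filter] at ha
  exact card_lt_card (filter_ssubset.2 ⟨a, ha.1, by simp [ha.2]⟩)

/-- Pigeonhole: `i ↦ {a ∈ A | a i ≠ a₀ i}` maps `C` injectively to the nonempty subsets of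
`A.erase a₀`. -/
theorem card_add_one_le_of_not_isConstAt {C : Finset (Fin n)} {A : Finset (Fin n → Bool)}
    (hconst : ∀ i ∈ C, ¬ IsConstAt A i)
    (hxor : ∀ i ∈ C, ∀ j ∈ C, i ≠ j → ¬ IsXorConstAt A i j) :
    C.card + 1 ≤ 2 ^ (A.card - 1) := by
  rcases A.eq_empty_or_nonempty with rfl | ⟨a₀, ha₀⟩
  · have : C = ∅ := eq_empty_of_forall_notMem fun i hi => hconst i hi ⟨true, by simp⟩
    simp [this]
  let D : Fin n → Finset (Fin n → Bool) := fun i => A.filter fun a => a i ≠ a₀ i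
  have hmaps : ∀ i ∈ C, D i ∈ (A.erase a₀).powerset.erase ∅ := by
    intro i hi
    refine mem_erase.2 ⟨fun hD => hconst i hi ⟨a₀ i, fun a ha => ?_⟩, mem_powerset.2 ?_⟩
    · by_contra hne
      have : a ∈ D i := mem_filter.2 ⟨ha, hne⟩
      simp [hD] at this
    · intro a ha
      rw [mem_filter] at ha
      exact mem_erase.2 ⟨fun h => ha.2 (h ▸ rfl), ha.1⟩
  have hinj : Set.InjOn D C := by
    intro i hi j hj hD
    by_contra hne
    refine hxor i hi j hj hne ⟨xor (a₀ i) (a₀ j), fun a ha => ?_⟩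
    have hmem := congrArg (a ∈ ·) hD
    simp only [D, mem_filter, ha, true_and, eq_iff_iff] at hmem
    revert hmem
    cases a i <;> cases a j <;> cases a₀ i <;> cases a₀ j <;> simp
  have hcard := card_le_card_of_injOn D hmaps hinj
  rw [card_erase_of_mem (empty_mem_powerset _), card_powerset, card_erase_of_mem ha₀] at hcard
  have : 1 ≤ 2 ^ (A.card - 1) := Nat.one_le_two_pow
  omega

end Coordinates

def DecidesMatchOn {n : ℕ} (C : Finset (Fin n)) (A : Finset (Fin n → Bool)) (T : DTree n) :
    Prop :=
  T.vars ⊆ C ∧ ∀ x, T.eval x = true ↔ ∃ a ∈ A, ∀ i ∈ C, a i = x i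

namespace DecidesMatchOn

variable {n : ℕ} {C : Finset (Fin n)} {A : Finset (Fin n → Bool)}

theorem leaf_false (C : Finset (Fin n)) : DecidesMatchOn C ∅ (leaf false) := by
  simp [DecidesMatchOn, vars, eval]

theorem leaf_true (hA : A.Nonempty) : DecidesMatchOn ∅ A (leaf true) := by
  simpa [DecidesMatchOn, vars, eval] using hA.exists_mem

theorem exists_filter_erase_iff {i : Fin n} (hi : i ∈ C) (x : Fin n → Bool) :
    (∃ a ∈ A.filter (· i = x i), ∀ k ∈ C.erase i, a k = x k) ↔
      ∃ a ∈ A, ∀ k ∈ C, a k = x k := by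
  refine exists_congr fun a => ?_
  simp only [mem_filter, mem_erase, and_assoc]
  constructor
  · rintro ⟨ha, hai, hC⟩
    refine ⟨ha, fun k hk => ?_⟩
    by_cases hki : k = i
    · exact hki ▸ hai
    · exact hC k ⟨hki, hk⟩
  · rintro ⟨ha, hC⟩
    exact ⟨ha, hC i hi, fun k hk => hC k hk.2⟩

theorem node {i : Fin n} {T0 T1 : DTree n} (hi : i ∈ C)
    (h0 : DecidesMatchOn (C.erase i) (A.filter (· i = false)) T0)
    (h1 : DecidesMatchOn (C.erase i) (A.filter (· i = true)) T1) :
    DecidesMatchOn C A (node i T0 T1) := by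
  refine ⟨?_, fun x => ?_⟩
  · simp only [vars, insert_subset_iff, union_subset_iff]
    exact ⟨hi, h0.1.trans (erase_subset i C), h1.1.trans (erase_subset i C)⟩
  · rw [← exists_filter_erase_iff hi]
    cases hx : x i
    · simpa [eval, hx] using h0.2 x
    · simpa [eval, hx] using h1.2 x

theorem avgCost_node {i : Fin n} {A0 A1 : Finset (Fin n → Bool)} {T0 T1 : DTree n}
    (h0 : DecidesMatchOn (C.erase i) A0 T0) (h1 : DecidesMatchOn (C.erase i) A1 T1) :
    avgCost (.node i T0 T1) = 1 + (avgCost T0 + avgCost T1) / 2 :=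
  DTree.avgCost_node (fun h => notMem_erase i C (h0.1 h)) (fun h => notMem_erase i C (h1.1 h))

theorem exists_node_of_isConstAt {i : Fin n} {T : DTree n} (hi : i ∈ C) (hA : IsConstAt A i)
    (hT : DecidesMatchOn (C.erase i) A T) :
    ∃ T', DecidesMatchOn C A T' ∧ avgCost T' = 1 + avgCost T / 2 := by
  obtain ⟨v, hv⟩ := hA
  have hsame : A.filter (· i = v) = A := filter_true_of_mem hv
  have hother : A.filter (· i = !v) = ∅ := filter_false_of_mem fun a ha => by simp [hv a ha]
  have hleaf := leaf_false (C.erase i)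
  cases v <;> simp only [Bool.not_false, Bool.not_true] at hother
  · refine ⟨.node i T (.leaf false), node hi (by rwa [hsame]) (by rwa [hother]), ?_⟩
    simp [avgCost_node hT hleaf]
  · refine ⟨.node i (.leaf false) T, node hi (by rwa [hother]) (by rwa [hsame]), ?_⟩
    simp [avgCost_node hleaf hT]

theorem exists_node_le {i : Fin n} {B : ℝ} (hi : i ∈ C)
    (hT : ∀ b, ∃ T, DecidesMatchOn (C.erase i) (A.filter (· i = b)) T ∧ avgCost T ≤ B) :
    ∃ T, DecidesMatchOn C A T ∧ avgCost T ≤ 1 + B := by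
  obtain ⟨T0, hT0, hcost0⟩ := hT false
  obtain ⟨T1, hT1, hcost1⟩ := hT true
  refine ⟨_, node hi hT0 hT1, ?_⟩
  rw [hT0.avgCost_node hT1]
  linarith

theorem exists_node_of_isXorConstAt {i j : Fin n} {B : ℝ} (hi : i ∈ C) (hj : j ∈ C.erase i)
    (hA : IsXorConstAt A i j)
    (hT : ∀ b, ∃ T, DecidesMatchOn ((C.erase i).erase j) (A.filter (· i = b)) T ∧
      avgCost T ≤ B) :
    ∃ T, DecidesMatchOn C A T ∧ avgCost T ≤ 2 + B / 2 := by
  have hchild (b : Bool) : ∃ T, DecidesMatchOn (C.erase i) (A.filter (· i = b)) T ∧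
      avgCost T ≤ 1 + B / 2 := by
    obtain ⟨T, hT, hcost⟩ := hT b
    obtain ⟨T', hT', hT'cost⟩ := hT.exists_node_of_isConstAt hj (hA.isConstAt_filter b)
    exact ⟨T', hT', by linarith⟩
  obtain ⟨T, hT, hcost⟩ := exists_node_le hi hchild
  exact ⟨T, hT, by linarith⟩

end DecidesMatchOn

noncomputable def costBound (w c : ℕ) : ℝ :=
  4 - 4 / 2 ^ w + 2 ^ 2 ^ w / (4 * 2 ^ c)

theorem two_pow_two_pow_succ (w : ℕ) : (2 : ℝ) ^ 2 ^ (w + 1) = (2 ^ 2 ^ w) ^ 2 := by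
  rw [pow_succ, pow_mul]

theorem costBound_nonneg (w c : ℕ) : 0 ≤ costBound w c := by
  have : (4 : ℝ) / 2 ^ w ≤ 4 := div_le_self (by norm_num) (one_le_pow₀ one_le_two)
  unfold costBound
  positivity

theorem costBound_mono_left {w' w : ℕ} (c : ℕ) (h : w' ≤ w) :
    costBound w' c ≤ costBound w c := by
  have h1 : (4 : ℝ) / 2 ^ w ≤ 4 / 2 ^ w' :=
    div_le_div_of_nonneg_left (by norm_num) (by positivity) (pow_le_pow_right₀ one_le_two h)
  have h2 : (2 : ℝ) ^ 2 ^ w' ≤ 2 ^ 2 ^ w :=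
    pow_le_pow_right₀ one_le_two (Nat.pow_le_pow_right two_pos h)
  unfold costBound
  gcongr

theorem one_add_costBound_div_two_le {w : ℕ} (c : ℕ) (hw : 1 ≤ w) :
    1 + costBound w c / 2 ≤ costBound w (c + 1) := by
  have hslack : costBound w (c + 1) = 1 + costBound w c / 2 + (1 - 2 / 2 ^ w) := by
    unfold costBound; rw [pow_succ]; field_simp; ring
  have : (2 : ℝ) / 2 ^ w ≤ 1 := by
    rw [div_le_one (by positivity)]
    exact le_self_pow₀ one_le_two (by omega)
  linarith

theorem two_add_costBound_div_two_le (w c : ℕ) :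
    2 + costBound w c / 2 ≤ costBound (w + 1) (c + 2) := by
  set Q : ℝ := 2 ^ 2 ^ w
  have hslack : costBound (w + 1) (c + 2)
      = 2 + costBound w c / 2 + Q * (Q - 2) / (16 * 2 ^ c) := by
    unfold costBound; rw [two_pow_two_pow_succ]; field_simp; ring
  have : 2 ≤ Q := le_self_pow₀ one_le_two (Nat.two_pow_pos w).ne'
  have : 0 ≤ Q * (Q - 2) / (16 * 2 ^ c) := by
    apply div_nonneg (mul_nonneg (by linarith) (by linarith)) (by positivity)
  linarith

theorem one_add_costBound_le {w c : ℕ} (hc : c + 2 ≤ 2 ^ w) :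
    1 + costBound w c ≤ costBound (w + 1) (c + 1) := by
  set Q : ℝ := 2 ^ 2 ^ w
  have hslack : costBound (w + 1) (c + 1)
      = 1 + costBound w c + 2 / 2 ^ w + (Q * (Q - 2) / (8 * 2 ^ c) - 1) := by
    unfold costBound; rw [two_pow_two_pow_succ]; field_simp; ring
  have hQ : 4 * 2 ^ c ≤ Q := by
    have : (4 : ℝ) * 2 ^ c = 2 ^ (c + 2) := by ring
    rw [this]
    exact pow_le_pow_right₀ one_le_two hc
  have : 1 ≤ Q * (Q - 2) / (8 * 2 ^ c) := by
    rw [one_le_div (by positivity)]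
    have : (1 : ℝ) ≤ 2 ^ c := one_le_pow₀ one_le_two
    nlinarith
  have : 0 ≤ (2 : ℝ) / 2 ^ w := by positivity
  linarith

theorem costBound_le_five {w c : ℕ} (h : 2 ^ w < c) : costBound w c ≤ 5 := by
  set Q : ℝ := 2 ^ 2 ^ w
  have hQ : 2 * Q ≤ 2 ^ c := by
    have : 2 * Q = 2 ^ (2 ^ w + 1) := by ring
    rw [this]
    exact pow_le_pow_right₀ one_le_two h
  have : Q / (4 * 2 ^ c) ≤ 1 := by
    rw [div_le_one (by positivity)]
    linarith [(by positivity : (0 : ℝ) < Q)]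
  have : 0 ≤ (4 : ℝ) / 2 ^ w := by positivity
  unfold costBound
  linarith

theorem exists_decidesMatchOn_of_forall_not_isConstAt {n v : ℕ} {C : Finset (Fin n)}
    {A : Finset (Fin n → Bool)} (hC : C.Nonempty) (hconst : ∀ i ∈ C, ¬ IsConstAt A i)
    (hv : A.card = v + 1)
    (ih : ∀ D ⊂ C, ∀ i ∈ C, ∀ b, ∃ T, DecidesMatchOn D (A.filter (· i = b)) T ∧
      avgCost T ≤ costBound v D.card) :
    ∃ T, DecidesMatchOn C A T ∧ avgCost T ≤ costBound (v + 1) C.card := by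
  by_cases hxor : ∃ i ∈ C, ∃ j ∈ C, i ≠ j ∧ IsXorConstAt A i j
  · obtain ⟨i, hi, j, hj, hij, hAij⟩ := hxor
    have hj' : j ∈ C.erase i := mem_erase.2 ⟨hij.symm, hj⟩
    obtain ⟨T, hT, hcost⟩ := DecidesMatchOn.exists_node_of_isXorConstAt hi hj' hAij
      (ih _ ((erase_ssubset hj').trans (erase_ssubset hi)) i hi)
    refine ⟨T, hT, hcost.trans ?_⟩
    rw [← card_erase_add_one hi, ← card_erase_add_one hj']
    exact two_add_costBound_div_two_le v _
  · push Not at hxor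
    obtain ⟨i, hi⟩ := hC
    have hcard := card_add_one_le_of_not_isConstAt hconst hxor
    rw [hv, Nat.add_sub_cancel, ← card_erase_add_one hi] at hcard
    obtain ⟨T, hT, hcost⟩ := DecidesMatchOn.exists_node_le hi (ih _ (erase_ssubset hi) i hi)
    refine ⟨T, hT, hcost.trans ?_⟩
    rw [← card_erase_add_one hi]
    exact one_add_costBound_le hcard

theorem exists_decidesMatchOn_avgCost_le {n : ℕ} (C : Finset (Fin n))
    (A : Finset (Fin n → Bool)) :
    ∃ T, DecidesMatchOn C A T ∧ avgCost T ≤ costBound A.card C.card := by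
  induction C using Finset.strongInduction generalizing A with
  | H C ih =>
  rcases A.eq_empty_or_nonempty with rfl | hA
  · exact ⟨_, .leaf_false C, by simp [costBound_nonneg]⟩
  rcases C.eq_empty_or_nonempty with rfl | hC
  · exact ⟨_, .leaf_true hA, by simp [costBound_nonneg]⟩
  by_cases hconst : ∃ j ∈ C, IsConstAt A j
  · obtain ⟨j, hj, hAj⟩ := hconst
    obtain ⟨T, hT, hcost⟩ := ih _ (erase_ssubset hj) A
    obtain ⟨T', hT', hT'cost⟩ := hT.exists_node_of_isConstAt hj hAj
    refine ⟨T', hT', ?_⟩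
    rw [hT'cost, ← card_erase_add_one hj]
    linarith [one_add_costBound_div_two_le (C.erase j).card (card_pos.2 hA)]
  push Not at hconst
  obtain ⟨v, hv⟩ : ∃ v, A.card = v + 1 := ⟨A.card - 1, by have := card_pos.2 hA; omega⟩
  rw [hv]
  refine exists_decidesMatchOn_of_forall_not_isConstAt hC hconst hv fun D hD i hi b => ?_
  obtain ⟨T, hT, hcost⟩ := ih D hD (A.filter (· i = b))
  have := card_filter_lt_of_not_isConstAt (hconst i hi) b
  exact ⟨T, hT, hcost.trans (costBound_mono_left _ (by omega))⟩

theorem DecidesMatchOn.computes {n : ℕ} {f : (Fin n → Bool) → Bool} {T : DTree n}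
    (hT : DecidesMatchOn univ (univ.filter fun x => f x = true) T) : Computes T f := by
  intro x
  rw [Bool.eq_iff_iff, hT.2]
  simp [← funext_iff]

theorem two_pow_lt_of_lt_logb {w n : ℕ} (h : (w : ℝ) < Real.logb 2 n) : 2 ^ w < n := by
  have hn : 0 < n := Nat.pos_of_ne_zero fun hn => by
    simp only [hn, CharP.cast_eq_zero, Real.logb_zero] at h
    exact (Nat.cast_nonneg w).not_gt h
  rw [Real.lt_logb_iff_rpow_lt one_lt_two (by exact_mod_cast hn), Real.rpow_natCast] at h
  exact_mod_cast h

theorem stmt6_general (n : ℕ) (f : (Fin n → Bool) → Bool)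
    (h : (wt f : ℝ) < Real.logb 2 n) :
    Dave f ≤ 5 := by
  obtain ⟨T, hT, hcost⟩ :=
    exists_decidesMatchOn_avgCost_le univ (univ.filter fun x => f x = true)
  calc Dave f ≤ avgCost T := dave_le_avgCost hT.computes
    _ ≤ costBound (wt f) n := by simpa [wt] using hcost
    _ ≤ 5 := costBound_le_five (two_pow_lt_of_lt_logb h)

theorem stmt6 (n : ℕ) (hn : 2 ≤ n) (f : (Fin n → Bool) → Bool)
    (h : (wt f : ℝ) < Real.logb 2 n) :
    Dave f ≤ 5 :=
  stmt6_general n f h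
end

section
/- Let f : {0,1}^n → {0,1} be a (t,δ)-parity function with wt(f) ≤ 2^{n-1}, where 1 ≤ t ≤ log₂(wt(f)) − 1 and δ ≤ 1/(2t). Then min_{x ∈ {0,1}^n} C_x(f) ≥ t. -/
lemma lookup_map_self {n : ℕ} (x : Fin n → Bool) (l : List (Fin n)) (a : Fin n) :
    (l.map fun i => (i, x i)).lookup a = if a ∈ l then some (x a) else none := by
  induction l with
  | nil => simp
  | cons i l ih =>
    by_cases h : a = i
    · subst h; simp [List.lookup]
    · simp [List.lookup, h, ih, beq_false_of_ne h]

lemma card_consistent {n : ℕ} (S : Finset (Fin n)) (x : Fin n → Bool) :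
    (Finset.univ.filter fun y : Fin n → Bool => ∀ i ∈ S, y i = x i).card = 2 ^ (n - S.card) := by
  rw [← Fintype.card_subtype]
  have e : {y : Fin n → Bool // ∀ i ∈ S, y i = x i} ≃ ({i : Fin n // i ∉ S} → Bool) :=
    { toFun := fun y i => y.1 i.1
      invFun := fun g => ⟨fun i => if h : i ∈ S then x i else g ⟨i, h⟩, fun i hi => by simp [hi]⟩
      left_inv := fun y => by
        apply Subtype.ext; funext i
        by_cases h : i ∈ S
        · simp [h, y.2 i h]
        · simp [h]
      right_inv := fun g => by funext i; simp [i.2] }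
  rw [Fintype.card_congr e, Fintype.card_fun]
  congr 1
  rw [Fintype.card_subtype]
  have : (Finset.univ.filter fun i : Fin n => i ∉ S) = Sᶜ := by ext i; simp
  rw [this, Finset.card_compl]; simp

set_option maxHeartbeats 1000000 in
theorem stmt9 (n t : ℕ) (δ : ℝ) (f : (Fin n → Bool) → Bool)
    (hpar : ParityFun f t δ) (hwt : wt f ≤ 2 ^ (n - 1)) (ht1 : 1 ≤ t)
    (ht2 : (t : ℝ) ≤ Real.logb 2 (wt f) - 1) (hδ : δ ≤ 1 / (2 * t)) :
    ∀ x : Fin n → Bool, t ≤ certC f x := by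
  intro x
  by_contra hcon
  push_neg at hcon
  -- basic weight facts
  have hw0 : 0 < wt f := by
    rcases Nat.eq_zero_or_pos (wt f) with h | h
    · rw [h] at ht2
      simp [Real.logb_zero] at ht2
      have : (1:ℝ) ≤ (t:ℝ) := by exact_mod_cast ht1
      linarith
    · exact h
  have ht1R : (1:ℝ) ≤ (t:ℝ) := by exact_mod_cast ht1
  have hwpow : (2:ℝ) ^ (t+1) ≤ (wt f : ℝ) := by
    have h1 : (2:ℝ) ^ ((t:ℝ)+1) ≤ (2:ℝ) ^ Real.logb 2 (wt f) :=
      Real.rpow_le_rpow_of_exponent_le one_le_two (by linarith)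
    have h2 : (2:ℝ) ^ Real.logb 2 (wt f) = (wt f : ℝ) :=
      Real.rpow_logb (by norm_num) (by norm_num) (by exact_mod_cast hw0)
    calc (2:ℝ) ^ (t+1) = (2:ℝ) ^ (((t+1 : ℕ)):ℝ) := by rw [Real.rpow_natCast]
    _ = (2:ℝ) ^ ((t:ℝ)+1) := by push_cast; ring_nf
    _ ≤ _ := h1.trans_eq h2
  have hw4 : (4:ℝ) ≤ (wt f : ℝ) := by
    have : (2:ℝ)^2 ≤ (2:ℝ)^(t+1) := pow_le_pow_right₀ one_le_two (by omega)
    nlinarith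
  have hw4' : 4 ≤ wt f := by exact_mod_cast hw4
  have hn : 1 ≤ n := by
    rcases Nat.eq_zero_or_pos n with h | h
    · subst h; simp at hwt; omega
    · exact h
  -- get a minimal certificate
  have hne : {k : ℕ | ∃ S : Finset (Fin n), IsCert f x S ∧ S.card = k}.Nonempty := by
    refine ⟨n, Finset.univ, ?_, by simp⟩
    intro y hy
    have : y = x := funext fun i => hy i (Finset.mem_univ i)
    rw [this]
  obtain ⟨S, hS, hSk⟩ := Nat.sInf_mem hne
  set k := S.card with hkdef
  have hkt : k < t := by rw [hSk]; exact hcon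
  have hkn : k ≤ n := by
    rw [hkdef]
    simpa using Finset.card_le_univ S
  clear_value k
  -- the path
  set L : List (Fin n × Bool) := S.toList.map (fun i => (i, x i)) with hLdef
  have hLlen : L.length = k := by simp [hLdef, Finset.length_toList, hkdef]
  have hnodup : (L.map Prod.fst).Nodup := by
    have : L.map Prod.fst = S.toList := by
      rw [hLdef, List.map_map]
      rw [show (Prod.fst ∘ fun i : Fin n => (i, x i)) = id from rfl, List.map_id]
    rw [this]; exact Finset.nodup_toList S
  have hpath := hpar L hnodup (by omega)
  -- characterize wtR along the path
  have hwtR : ∀ j : ℕ, wtR f (PathRho L j) =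
      (Finset.univ.filter fun y : Fin n → Bool =>
        f y = true ∧ ∀ i ∈ S.toList.take j, y i = x i).card := by
    intro j
    unfold wtR
    congr 1
    apply Finset.filter_congr
    intro y _
    have hρ : ∀ a : Fin n, PathRho L j a =
        if a ∈ S.toList.take j then some (x a) else none := by
      intro a
      have : L.take j = (S.toList.take j).map (fun i => (i, x i)) := by
        rw [hLdef, List.map_take]
      unfold PathRho
      rw [this, lookup_map_self]
    constructor
    · rintro ⟨h1, h2⟩
      refine ⟨h1, fun i hi => h2 i (x i) ?_⟩
      rw [hρ i, if_pos hi]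
    · rintro ⟨h1, h2⟩
      refine ⟨h1, fun i b hb => ?_⟩
      rw [hρ i] at hb
      by_cases hi : i ∈ S.toList.take j
      · rw [if_pos hi] at hb
        rw [h2 i hi]
        exact (Option.some_inj.mp hb)
      · rw [if_neg hi] at hb; exact absurd hb (by simp)
  have hwtR0 : wtR f (PathRho L 0) = wt f := by
    rw [hwtR 0]
    simp [wt]
  -- positivity constants
  have hδhalf : δ ≤ 1/2 := by
    have h2t : (2:ℝ) ≤ 2*t := by linarith
    have : 1/(2*(t:ℝ)) ≤ 1/2 := by
      apply one_div_le_one_div_of_le <;> linarith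
    linarith
  have hcneg : (0:ℝ) < (1-δ)/2 := by linarith
  have hwR : (0:ℝ) < (wt f : ℝ) := by exact_mod_cast hw0
  -- the key chain
  have key : ∀ j : ℕ, j ≤ k →
      ((1-δ)/2)^j * (wt f : ℝ) ≤ (wtR f (PathRho L j) : ℝ) ∧
      (wtR f (PathRho L j) : ℝ) ≤ ((1+δ)/2)^j * (wt f : ℝ) := by
    intro j
    induction j with
    | zero => intro _; rw [hwtR0]; simp
    | succ j ih =>
      intro hj
      obtain ⟨hl, hu⟩ := ih (by omega)
      obtain ⟨hp1, hp2⟩ := hpath (j+1) (by omega) (by omega)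
      simp only [Nat.add_sub_cancel] at hp1 hp2
      have hlow : ((1-δ)/2)^(j+1) * (wt f : ℝ) ≤ (wtR f (PathRho L (j+1)) : ℝ) := by
        have h1 : ((1-δ)/2)^(j+1) * (wt f : ℝ) = (1/2)*(1-δ) * (((1-δ)/2)^j * (wt f : ℝ)) := by
          ring
        rw [h1]
        calc (1/2)*(1-δ) * (((1-δ)/2)^j * (wt f : ℝ))
            ≤ (1/2)*(1-δ) * (wtR f (PathRho L j) : ℝ) := by
              apply mul_le_mul_of_nonneg_left hl; linarith
        _ ≤ _ := hp1
      refine ⟨hlow, ?_⟩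
      have hjpos : (0:ℝ) < (wtR f (PathRho L j) : ℝ) :=
        lt_of_lt_of_le (mul_pos (pow_pos hcneg j) hwR) hl
      have hj1pos : (0:ℝ) < (wtR f (PathRho L (j+1)) : ℝ) :=
        lt_of_lt_of_le (mul_pos (pow_pos hcneg (j+1)) hwR) hlow
      have hδpos : (0:ℝ) < 1 + δ := by nlinarith
      calc (wtR f (PathRho L (j+1)) : ℝ) ≤ (1/2)*(1+δ) * (wtR f (PathRho L j) : ℝ) := hp2
      _ ≤ (1/2)*(1+δ) * (((1+δ)/2)^j * (wt f : ℝ)) := by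
          apply mul_le_mul_of_nonneg_left hu; linarith
      _ = ((1+δ)/2)^(j+1) * (wt f : ℝ) := by ring
  obtain ⟨hlowk, hupk⟩ := key k le_rfl
  have hlowpos : (0:ℝ) < (wtR f (PathRho L k) : ℝ) :=
    lt_of_lt_of_le (mul_pos (pow_pos hcneg k) hwR) hlowk
  -- there is a true point consistent with the full path; hence f x = true
  have htake : S.toList.take k = S.toList := by
    apply List.take_of_length_le
    simp [Finset.length_toList, hkdef]
  have hmemS : ∀ i : Fin n, i ∈ S.toList ↔ i ∈ S := fun i => Finset.mem_toList
  have hpos_nat : 0 < wtR f (PathRho L k) := by exact_mod_cast hlowpos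
  rw [hwtR k] at hpos_nat
  obtain ⟨y, hy⟩ := Finset.card_pos.mp hpos_nat
  rw [Finset.mem_filter] at hy
  obtain ⟨-, hy1, hy2⟩ := hy
  have hfx : f x = true := by
    rw [← hS y (fun i hi => hy2 i (by rw [htake, hmemS]; exact hi))]
    exact hy1
  -- hence all consistent points are true, so wtR = 2^(n-k)
  have hall : wtR f (PathRho L k) = 2 ^ (n - k) := by
    rw [hwtR k]
    have hrw : (2:ℕ) ^ (n-k) = 2 ^ (n - S.card) := by rw [hkdef]
    rw [hrw, ← card_consistent S x]
    congr 1
    apply Finset.filter_congr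
    intro y _
    constructor
    · rintro ⟨-, h2⟩
      intro i hi
      exact h2 i (by rw [htake, hmemS]; exact hi)
    · intro h2
      have hcons : ∀ i ∈ S.toList.take k, y i = x i := by
        intro i hi
        exact h2 i (by rw [htake, hmemS] at hi; exact hi)
      refine ⟨?_, hcons⟩
      rw [hS y (fun i hi => h2 i hi)]
      exact hfx
  -- final contradiction
  have hcast : ((2:ℝ) ^ (n-k) : ℝ) ≤ ((1+δ)/2)^k * (wt f : ℝ) := by
    have h := hupk
    rw [hall] at h
    calc (2:ℝ)^(n-k) = ((2^(n-k) : ℕ) : ℝ) := by push_cast; ring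
    _ ≤ _ := h
  rcases Nat.eq_zero_or_pos k with hk0 | hk1
  · -- k = 0 : wt f = 2^n > 2^(n-1), contradiction
    rw [hk0] at hall
    rw [hwtR0] at hall
    rw [Nat.sub_zero] at hall
    have hlt : n - 1 < n := Nat.sub_lt (Nat.lt_of_lt_of_le Nat.one_pos hn) Nat.one_pos
    have h2 : 2 ^ (n-1) < 2 ^ n := Nat.pow_lt_pow_right one_lt_two hlt
    have hcontr : 2 ^ n ≤ 2 ^ (n-1) := by rw [← hall]; exact hwt
    exact absurd hcontr (not_le.mpr h2)
  · -- k ≥ 1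
    have hδpos : (0:ℝ) < 1 + δ := by
      obtain ⟨hl1, hu1⟩ := key 1 hk1
      have h1pos : (0:ℝ) < (wtR f (PathRho L 1) : ℝ) :=
        lt_of_lt_of_le (mul_pos (pow_pos hcneg 1) hwR) hl1
      nlinarith
    have hwle : (wt f : ℝ) ≤ 2 ^ (n-1) := by exact_mod_cast hwt
    have hckpos : (0:ℝ) ≤ ((1+δ)/2)^k := by positivity
    have hstep : (2:ℝ) ^ (n-k) ≤ ((1+δ)/2)^k * 2^(n-1) := by
      calc (2:ℝ)^(n-k) ≤ ((1+δ)/2)^k * (wt f : ℝ) := hcast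
      _ ≤ _ := by apply mul_le_mul_of_nonneg_left hwle hckpos
    have h2le : (2:ℝ) ≤ (1+δ)^k := by
      have e1 : (2:ℝ)^(n-k) * 2^k = 2^n := by rw [← pow_add, Nat.sub_add_cancel hkn]
      have e2 : (2:ℝ) * 2^(n-1) = 2^n := by rw [← pow_succ', Nat.sub_add_cancel hn]
      have e3 : ((1+δ)/2)^k * 2^k = (1+δ)^k := by
        rw [div_pow]; field_simp
      have h2k : (0:ℝ) < 2^k := by positivity
      have h2n1 : (0:ℝ) < 2^(n-1) := by positivity
      have := mul_le_mul_of_nonneg_right hstep (le_of_lt h2k)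
      rw [e1] at this
      rw [mul_assoc, mul_comm ((2:ℝ)^(n-1)) ((2:ℝ)^k), ← mul_assoc, e3] at this
      rw [← e2] at this
      exact le_of_mul_le_mul_right this h2n1
    have hexp : (1+δ)^k ≤ Real.exp (δ * k) := by
      calc (1+δ)^k ≤ (Real.exp δ)^k := by
            apply pow_le_pow_left₀ (by linarith) (by linarith [Real.add_one_le_exp δ])
      _ = Real.exp (δ * k) := by rw [← Real.exp_nat_mul, mul_comm]
    have hδk : δ * k ≤ 1/2 := by
      have hkR : (k:ℝ) ≤ (t:ℝ) := by exact_mod_cast le_of_lt hkt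
      have hk0R : (0:ℝ) ≤ (k:ℝ) := Nat.cast_nonneg k
      have htpos : (0:ℝ) < 2 * t := by linarith
      have h1 : δ * k ≤ (1/(2*t)) * k := mul_le_mul_of_nonneg_right hδ hk0R
      have h2 : (1/(2*(t:ℝ))) * k ≤ 1/2 := by
        rw [div_mul_eq_mul_div, div_le_div_iff₀ htpos two_pos]
        linarith
      linarith
    have hhalf : Real.exp (δ * k) ≤ Real.exp (1/2) := Real.exp_le_exp.mpr hδk
    have hlt2 : Real.exp (1/2) < 2 := by
      have hsq : Real.exp (1/2) ^ 2 = Real.exp 1 := by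
        rw [← Real.exp_nat_mul]; norm_num
      nlinarith [Real.exp_one_lt_d9, Real.exp_pos (1/2)]
    linarith
end

section
/- Let f be a (t,δ)-parity function with 0 < wt(f) ≤ 2^{n-1}, 1 ≤ t ≤ log₂(wt(f)) − 1 and δ ≤ 1/(2t). Then for every restriction ρ fixing j ≤ t coordinates, 1 ≤ wt(f|_ρ) ≤ 0.8244 · 2^{n−j}; in particular, f|_ρ is not constant. -/
lemma exp_half_le' : Real.exp (1/2) ≤ 1.6488 := by
  have hsq : Real.exp (1/2) ^ 2 = Real.exp 1 := by
    rw [← Real.exp_nat_mul]; norm_num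
  nlinarith [Real.exp_one_lt_d9, (Real.exp_pos (1/2)).le]

lemma lookup_map_eq' {n : ℕ} (g : Fin n → Bool) (l : List (Fin n)) (i : Fin n) :
    (l.map fun a => (a, g a)).lookup i = if i ∈ l then some (g i) else none := by
  induction l with
  | nil => simp [List.lookup]
  | cons a l ih =>
    by_cases h : i = a
    · simp [List.lookup, h]
    · have hb : (i == a) = false := beq_eq_false_iff_ne.mpr h
      simp [List.lookup, hb, ih, h]

theorem stmt10 (n t : ℕ) (δ : ℝ) (f : (Fin n → Bool) → Bool)
    (hpar : ParityFun f t δ) (hwt0 : 0 < wt f) (hwt : wt f ≤ 2 ^ (n - 1)) (ht1 : 1 ≤ t)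
    (ht2 : (t : ℝ) ≤ Real.logb 2 (wt f) - 1) (hδ : δ ≤ 1 / (2 * t)) :
    ∀ ρ : Fin n → Option Bool, suppCard ρ ≤ t →
      1 ≤ wtR f ρ ∧ (wtR f ρ : ℝ) ≤ 0.8244 * 2 ^ (n - suppCard ρ) := by
  have htR : (1:ℝ) ≤ t := by exact_mod_cast ht1
  have hwtfR : (0:ℝ) < wt f := by exact_mod_cast hwt0
  have hwtbig : (2:ℕ) ^ (t+1) ≤ wt f := by
    have h2 : (2:ℝ) ^ ((((t:ℕ)+1 : ℕ)):ℝ) ≤ (2:ℝ) ^ Real.logb 2 (wt f) :=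
      Real.rpow_le_rpow_of_exponent_le one_le_two (by push_cast; linarith)
    rw [Real.rpow_logb (by norm_num) (by norm_num) hwtfR, Real.rpow_natCast] at h2
    exact_mod_cast h2
  have hn : t + 1 ≤ n - 1 := by
    have h := le_trans hwtbig hwt
    exact (Nat.pow_le_pow_iff_right (by norm_num)).1 h
  have hn3 : 3 ≤ n := by omega
  have hδ2 : δ ≤ 1/2 := by
    have h : 1/(2*(t:ℝ)) ≤ 1/2 := by
      apply one_div_le_one_div_of_le (by norm_num)
      linarith
    linarith
  intro ρ hρt
  have hjn : suppCard ρ ≤ n := le_trans (Finset.card_filter_le _ _) (by simp)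
  set S := Finset.univ.filter (fun i : Fin n => (ρ i).isSome) with hS
  set L : List (Fin n × Bool) := S.toList.map (fun i => (i, (ρ i).getD false)) with hLdef
  have hmapfst : L.map Prod.fst = S.toList := by
    simp [hLdef, List.map_map, Function.comp_def]
  have hnod : (L.map Prod.fst).Nodup := by rw [hmapfst]; exact S.nodup_toList
  have hlen : L.length = suppCard ρ := by
    simp only [hLdef, List.length_map, Finset.length_toList, suppCard, hS]
  have hlookup : ∀ j, L.length ≤ j → PathRho L j = ρ := by
    intro j hj
    funext i
    have htake : L.take j = L := List.take_of_length_le hj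
    rw [PathRho, htake, hLdef, lookup_map_eq']
    by_cases hi : (ρ i).isSome
    · have hiS : i ∈ S.toList := by simp [Finset.mem_toList, hS, hi]
      rw [if_pos hiS]
      obtain ⟨b, hb⟩ := Option.isSome_iff_exists.mp hi
      simp [hb]
    · have hiS : i ∉ S.toList := by simp [Finset.mem_toList, hS, hi]
      rw [if_neg hiS]
      exact (Option.not_isSome_iff_eq_none.mp hi).symm
  have h0 : wtR f (PathRho L 0) = wt f := by
    simp [wtR, wt, PathRho, List.lookup]
  have hpath := hpar L hnod (by rw [hlen]; exact hρt)
  have hpos : ∀ j, j ≤ L.length → 0 < (wtR f (PathRho L j) : ℝ) := by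
    intro j
    induction j with
    | zero => intro _; rw [h0]; exact hwtfR
    | succ k ih =>
      intro hk
      obtain ⟨hlo, _⟩ := hpath (k+1) (by omega) hk
      simp only [Nat.add_sub_cancel] at hlo
      have hk2 := ih (Nat.le_of_succ_le hk)
      nlinarith
  have h1wtR : 1 ≤ wtR f ρ := by
    have h := hpos L.length le_rfl
    rw [hlookup L.length le_rfl] at h
    have : 0 < wtR f ρ := by exact_mod_cast h
    omega
  rcases Nat.eq_zero_or_pos (suppCard ρ) with hj0 | hj0
  · have hρnone : ρ = fun _ => none := by
      funext i
      by_contra hne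
      have hi : (ρ i).isSome := Option.ne_none_iff_isSome.mp hne
      have hiS : i ∈ S := by simp [hS, hi]
      have hcard : 0 < S.card := Finset.card_pos.mpr ⟨i, hiS⟩
      have : suppCard ρ = S.card := by simp only [suppCard, hS]
      omega
    have hwtReq : wtR f ρ = wt f := by
      rw [hρnone]; simp [wtR, wt]
    refine ⟨h1wtR, ?_⟩
    rw [hwtReq, hj0]
    have h1 : (wt f : ℝ) ≤ (2:ℝ)^(n-1) := by exact_mod_cast hwt
    have e1 : (2:ℝ)^(n-1) * 2 = 2^(n-0) := by
      rw [← pow_succ]; congr 1; omega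
    nlinarith [pow_pos (by norm_num : (0:ℝ) < 2) (n-1)]
  · have hlen1 : 1 ≤ L.length := by omega
    obtain ⟨hlo1, hhi1⟩ := hpath 1 le_rfl hlen1
    have hp1 := hpos 1 hlen1
    have hp0 := hpos 0 (by omega)
    simp only [Nat.sub_self] at hhi1
    have hc : 0 < (1/2)*(1+δ) := by nlinarith
    have hub : ∀ k, k ≤ L.length → (wtR f (PathRho L k) : ℝ) ≤ ((1/2)*(1+δ))^k * wt f := by
      intro k
      induction k with
      | zero => intro _; rw [h0]; simp
      | succ m ih =>
        intro hk
        obtain ⟨_, hhi⟩ := hpath (m+1) (by omega) hk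
        simp only [Nat.add_sub_cancel] at hhi
        have ihm := ih (Nat.le_of_succ_le hk)
        calc (wtR f (PathRho L (m+1)) : ℝ) ≤ (1/2)*(1+δ) * wtR f (PathRho L m) := hhi
          _ ≤ (1/2)*(1+δ) * (((1/2)*(1+δ))^m * wt f) :=
              mul_le_mul_of_nonneg_left ihm hc.le
          _ = ((1/2)*(1+δ))^(m+1) * wt f := by ring
    set j := suppCard ρ with hj
    have h1δ : (0:ℝ) < 1 + δ := by nlinarith
    have hδj : δ * j ≤ 1/2 := by
      rcases le_or_gt δ 0 with h | h
      · have : δ * j ≤ 0 := mul_nonpos_of_nonpos_of_nonneg h (Nat.cast_nonneg j)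
        linarith
      · have hjt : (j:ℝ) ≤ t := by exact_mod_cast hρt
        have h2t : (0:ℝ) < 2*t := by linarith
        have hδ2t : δ * (2*t) ≤ 1 := (le_div_iff₀ h2t).mp hδ
        have h1 : δ * j ≤ δ * t := mul_le_mul_of_nonneg_left hjt h.le
        have h2 : δ * (2*t) = 2*(δ*t) := by ring
        linarith
    have key : (1+δ)^j ≤ 1.6488 := by
      calc (1+δ)^j ≤ Real.exp δ ^ j :=
            pow_le_pow_left₀ h1δ.le (by linarith [Real.add_one_le_exp δ]) j
        _ = Real.exp (δ * j) := by rw [← Real.exp_nat_mul, mul_comm]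
        _ ≤ Real.exp (1/2) := Real.exp_le_exp.mpr hδj
        _ ≤ 1.6488 := exp_half_le'
    have hwle : (wtR f ρ : ℝ) ≤ ((1/2)*(1+δ))^j * wt f := by
      have h := hub L.length le_rfl
      rwa [hlookup L.length le_rfl, hlen] at h
    have h2n1 : (wt f : ℝ) ≤ (2:ℝ)^(n-1) := by exact_mod_cast hwt
    have e1 : (2:ℝ)^(n-1) * 2 = 2^n := by rw [← pow_succ]; congr 1; omega
    have e2 : (2:ℝ)^(n-j) * 2^j = 2^n := by rw [← pow_add]; congr 1; omega
    have e3 : ((1/2)*(1+δ))^j * 2^j = (1+δ)^j := by rw [← mul_pow]; ring_nf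
    have e4 : ((1/2)*(1+δ))^j * 2^(n-1) * 2 = (1+δ)^j * 2^(n-j) := by
      calc ((1/2)*(1+δ))^j * 2^(n-1) * 2 = ((1/2)*(1+δ))^j * (2^(n-1) * 2) := by ring
        _ = ((1/2)*(1+δ))^j * (2^(n-j) * 2^j) := by rw [e1, ← e2]
        _ = (((1/2)*(1+δ))^j * 2^j) * 2^(n-j) := by ring
        _ = (1+δ)^j * 2^(n-j) := by rw [e3]
    have P1 : (1+δ)^j * 2^(n-j) ≤ 1.6488 * 2^(n-j) :=
      mul_le_mul_of_nonneg_right key (by positivity)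
    refine ⟨h1wtR, ?_⟩
    calc (wtR f ρ : ℝ) ≤ ((1/2)*(1+δ))^j * wt f := hwle
      _ ≤ ((1/2)*(1+δ))^j * (2:ℝ)^(n-1) :=
          mul_le_mul_of_nonneg_left h2n1 (pow_nonneg hc.le j)
      _ ≤ 0.8244 * 2^(n-j) := by linarith
end

section
/- Let S_m = X_1 + ⋯ + X_m where (X_1,…,X_m) are obtained by sampling m items without replacement from an urn containing N zeros and N ones (m ≤ 2N). Then for any t > 0, Pr[|S_m − m/2| ≥ t] ≤ 2 exp(−2t²/m). -/
/-!
Chernoff's method. Counting embeddings by their image reduces the claim to a uniformly random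
`m`-subset `A` of a `2N`-set in which a half `T` is marked. For `x ≥ 0`, `∑_A x ^ #(A ∩ T)` is the
coefficient of `X ^ (2N - m)` in `((X + 1) (X + x)) ^ N`, which by AM-GM is dominated
coefficientwise by `((X + (1 + x) / 2) ^ 2) ^ N`; its coefficient `C(2N, m) ((1 + x) / 2) ^ m` is
the moment generating function of `m` independent fair bits. With `x = exp (4t / m)` and
`cosh s ≤ exp (s ^ 2 / 2)` this bounds the upper tail, and the lower tail of `#(A ∩ T)` is the
upper tail of `#(A ∩ Tᶜ)`.
-/

open Finset Polynomial Real

namespace Polynomial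

variable {R : Type*} [CommSemiring R] [PartialOrder R] [IsOrderedRing R]

theorem coeff_mul_nonneg {p q : R[X]} (hp : ∀ k, 0 ≤ p.coeff k) (hq : ∀ k, 0 ≤ q.coeff k)
    (k : ℕ) : 0 ≤ (p * q).coeff k := by
  rw [coeff_mul]
  exact sum_nonneg fun _ _ => mul_nonneg (hp _) (hq _)

theorem coeff_pow_nonneg {p : R[X]} (hp : ∀ k, 0 ≤ p.coeff k) (n k : ℕ) :
    0 ≤ (p ^ n).coeff k := by
  induction n generalizing k with
  | zero => rw [pow_zero, coeff_one]; split_ifs <;> simp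
  | succ n ih => rw [pow_succ]; exact coeff_mul_nonneg ih hp k

theorem coeff_mul_le_coeff_mul {p q r s : R[X]} (hp : ∀ k, 0 ≤ p.coeff k)
    (hr : ∀ k, 0 ≤ r.coeff k) (hpq : ∀ k, p.coeff k ≤ q.coeff k)
    (hrs : ∀ k, r.coeff k ≤ s.coeff k) (k : ℕ) : (p * r).coeff k ≤ (q * s).coeff k := by
  rw [coeff_mul, coeff_mul]
  exact sum_le_sum fun _ _ => mul_le_mul (hpq _) (hrs _) (hr _) ((hp _).trans (hpq _))

theorem coeff_pow_le_coeff_pow {p q : R[X]} (hp : ∀ k, 0 ≤ p.coeff k)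
    (hpq : ∀ k, p.coeff k ≤ q.coeff k) (n k : ℕ) : (p ^ n).coeff k ≤ (q ^ n).coeff k := by
  induction n generalizing k with
  | zero => rfl
  | succ n ih =>
    rw [pow_succ, pow_succ]
    exact coeff_mul_le_coeff_mul (coeff_pow_nonneg hp n) hp ih hpq k

theorem coeff_X_add_C_mul_X_add_C_le_coeff_sq (a b : ℝ) (k : ℕ) :
    ((X + C a) * (X + C b)).coeff k ≤ ((X + C ((a + b) / 2)) ^ 2).coeff k := by
  have expand : ∀ u v : ℝ, (X + C u) * (X + C v) = X ^ 2 + C (u + v) * X + C (u * v) := by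
    intro u v; simp only [C_add, C_mul]; ring
  rw [sq, expand, expand]
  simp only [coeff_add, coeff_X_pow, coeff_C_mul_X, coeff_C]
  split_ifs <;> nlinarith [sq_nonneg (a - b)]

theorem coeff_X_add_C_mul_X_add_C_nonneg {a b : ℝ} (ha : 0 ≤ a) (hb : 0 ≤ b) (k : ℕ) :
    0 ≤ ((X + C a) * (X + C b)).coeff k := by
  refine coeff_mul_nonneg (fun k => ?_) (fun k => ?_) k <;>
    · rw [coeff_add, coeff_X, coeff_C]; split_ifs <;> positivity

end Polynomial

theorem card_filter_le_sum_exp {ι : Type*} (s : Finset ι) (f : ι → ℝ) {l : ℝ} (hl : 0 ≤ l)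
    (t : ℝ) : (#{a ∈ s | t ≤ f a} : ℝ) ≤ ∑ a ∈ s, exp (l * (f a - t)) := by
  rw [card_filter, Nat.cast_sum]
  refine sum_le_sum fun a _ => ?_
  split_ifs with h
  · exact_mod_cast one_le_exp (mul_nonneg hl (sub_nonneg.mpr h))
  · exact_mod_cast (exp_pos _).le

theorem one_add_exp_div_two_pow_mul_exp_le (m : ℕ) (t : ℝ) :
    ((1 + exp (4 * t / m)) / 2) ^ m * exp (-(4 * t / m) * (m / 2 + t)) ≤
      exp (-2 * t ^ 2 / m) := by
  set l := 4 * t / m with hl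
  have hcosh : (1 + exp l) / 2 = exp (l / 2) * cosh (l / 2) := by
    simp only [cosh_eq, mul_add, mul_div_assoc', ← exp_add, add_halves, add_neg_cancel, exp_zero]
    ring
  have hexp : exp (m * (l / 2)) * exp (-l * (m / 2 + t)) = exp (-(l * t)) := by
    rw [← exp_add]; ring_nf
  calc ((1 + exp l) / 2) ^ m * exp (-l * (m / 2 + t))
      = cosh (l / 2) ^ m * (exp (m * (l / 2)) * exp (-l * (m / 2 + t))) := by
        rw [hcosh, mul_pow, ← exp_nat_mul]; ring
    _ = cosh (l / 2) ^ m * exp (-(l * t)) := by rw [hexp]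
    _ ≤ exp ((l / 2) ^ 2 / 2) ^ m * exp (-(l * t)) := by
        gcongr
        exact cosh_le_exp_half_sq _
    _ = exp (-2 * t ^ 2 / m) := by
        rw [← exp_nat_mul, ← exp_add, hl]
        rcases eq_or_ne (m : ℝ) 0 with hm | hm
        · simp [hm]
        · field_simp
          ring_nf

section Urn

variable {α : Type*} [Fintype α] [DecidableEq α]

theorem sum_powersetCard_pow_card_inter_le {T : Finset α} (hT : 2 * #T = Fintype.card α)
    {m : ℕ} (hm : m ≤ Fintype.card α) {x : ℝ} (hx : 0 ≤ x) :
    ∑ A ∈ univ.powersetCard m, x ^ #(A ∩ T) ≤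
      (Fintype.card α).choose m * ((1 + x) / 2) ^ m := by
  have hk : Fintype.card α - m ≤ #(univ : Finset α) := by simp
  have hkm : #(univ : Finset α) - (Fintype.card α - m) = m := by simp; omega
  have hTc : #Tᶜ = #T := by rw [card_compl]; omega
  have hlhs : ∑ A ∈ univ.powersetCard m, x ^ #(A ∩ T) =
      (((X + C 1) * (X + C x)) ^ #T).coeff (Fintype.card α - m) := by
    have hprod : ∏ i, (X + C (if i ∈ T then x else 1)) = ((X + C 1) * (X + C x)) ^ #T := by
      have hout : ∏ i ∈ Tᶜ, (X + C (if i ∈ T then x else 1)) = (X + C 1) ^ #T := by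
        rw [← hTc, ← prod_const]
        exact prod_congr rfl fun i hi => by rw [if_neg (mem_compl.mp hi)]
      have hin : ∏ i ∈ T, (X + C (if i ∈ T then x else 1)) = (X + C x) ^ #T := by
        rw [← prod_const]
        exact prod_congr rfl fun i hi => by rw [if_pos hi]
      rw [← prod_compl_mul_prod T, hout, hin, mul_pow]
    rw [← hprod, prod_X_add_C_coeff _ _ hk, hkm]
    exact sum_congr rfl fun A _ => by rw [prod_ite_mem, prod_const]
  have hrhs : ((Fintype.card α).choose m : ℝ) * ((1 + x) / 2) ^ m =
      (((X + C ((1 + x) / 2)) ^ 2) ^ #T).coeff (Fintype.card α - m) := by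
    have hprod : ((X + C ((1 + x) / 2)) ^ 2) ^ #T = ∏ _i : α, (X + C ((1 + x) / 2)) := by
      rw [← pow_mul, hT, prod_const, card_univ]
    rw [hprod, prod_X_add_C_coeff _ _ hk, hkm, sum_congr rfl fun A hA => by
      rw [prod_const, (mem_powersetCard.mp hA).2], sum_const, card_powersetCard, nsmul_eq_mul,
      card_univ]
  rw [hlhs, hrhs]
  exact coeff_pow_le_coeff_pow (coeff_X_add_C_mul_X_add_C_nonneg zero_le_one hx)
    (coeff_X_add_C_mul_X_add_C_le_coeff_sq 1 x) _ _

theorem card_filter_powersetCard_le_choose_mul_exp {T : Finset α}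
    (hT : 2 * #T = Fintype.card α) {m : ℕ} (hm : m ≤ Fintype.card α) {t : ℝ} (ht : 0 ≤ t) :
    (#{A ∈ univ.powersetCard m | t ≤ (#(A ∩ T) : ℝ) - m / 2} : ℝ) ≤
      (Fintype.card α).choose m * exp (-2 * t ^ 2 / m) := by
  set l := 4 * t / m
  calc (#{A ∈ univ.powersetCard m | t ≤ (#(A ∩ T) : ℝ) - m / 2} : ℝ)
      ≤ ∑ A ∈ univ.powersetCard m, exp (l * ((#(A ∩ T) : ℝ) - m / 2 - t)) :=
        card_filter_le_sum_exp _ _ (by positivity) t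
    _ = (∑ A ∈ univ.powersetCard m, exp l ^ #(A ∩ T)) * exp (-l * (m / 2 + t)) := by
        rw [sum_mul]
        refine sum_congr rfl fun A _ => ?_
        rw [← exp_nat_mul, ← exp_add]
        ring_nf
    _ ≤ ((Fintype.card α).choose m * ((1 + exp l) / 2) ^ m) *
          exp (-l * (m / 2 + t)) := by
        gcongr
        exact sum_powersetCard_pow_card_inter_le hT hm (exp_pos l).le
    _ ≤ (Fintype.card α).choose m * exp (-2 * t ^ 2 / m) := by
        rw [mul_assoc]
        gcongr
        exact one_add_exp_div_two_pow_mul_exp_le m t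

theorem card_filter_powersetCard_abs_le_choose_mul_exp {T : Finset α}
    (hT : 2 * #T = Fintype.card α) {m : ℕ} (hm : m ≤ Fintype.card α) {t : ℝ} (ht : 0 ≤ t) :
    (#{A ∈ univ.powersetCard m | t ≤ |(#(A ∩ T) : ℝ) - m / 2|} : ℝ) ≤
      (Fintype.card α).choose m * (2 * exp (-2 * t ^ 2 / m)) := by
  have hTc : 2 * #Tᶜ = Fintype.card α := by rw [card_compl]; omega
  have hsub : {A ∈ (univ : Finset α).powersetCard m | t ≤ |(#(A ∩ T) : ℝ) - m / 2|} ⊆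
      {A ∈ (univ : Finset α).powersetCard m | t ≤ (#(A ∩ T) : ℝ) - m / 2} ∪
        {A ∈ (univ : Finset α).powersetCard m | t ≤ (#(A ∩ Tᶜ) : ℝ) - m / 2} := by
    intro A hA
    simp only [mem_filter, mem_union] at hA ⊢
    obtain ⟨hAm, hAt⟩ := hA
    have hsplit : (#(A ∩ Tᶜ) : ℝ) = m - #(A ∩ T) := by
      rw [← (mem_powersetCard.mp hAm).2, ← card_inter_add_card_sdiff A T, sdiff_eq_inter_compl]
      push_cast; ring
    rcases le_abs.mp hAt with h | h
    · exact Or.inl ⟨hAm, h⟩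
    · exact Or.inr ⟨hAm, by linarith⟩
  have hcard := (card_le_card hsub).trans (card_union_le _ _)
  rw [← Nat.cast_le (α := ℝ), Nat.cast_add] at hcard
  linarith [card_filter_powersetCard_le_choose_mul_exp hT hm ht,
    card_filter_powersetCard_le_choose_mul_exp hTc hm ht]

theorem card_filter_embedding_map_eq {m : ℕ} {A : Finset α} (hA : #A = m) :
    #{σ : Fin m ↪ α | univ.map σ = A} = m.factorial := by
  have e : {σ : Fin m ↪ α // univ.map σ = A} ≃ (Fin m ↪ A) :=
    { toFun := fun σ =>
        ⟨fun k => ⟨σ.1 k, σ.2.subst (motive := (σ.1 k ∈ ·)) (mem_map_of_mem σ.1 (mem_univ k))⟩,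
          fun a b hab => σ.1.injective (congrArg Subtype.val hab)⟩
      invFun := fun τ => ⟨τ.trans (Function.Embedding.subtype _),
        eq_of_subset_of_card_le
          (fun a ha => by obtain ⟨k, _, rfl⟩ := mem_map.mp ha; exact (τ k).2) (by simp [hA])⟩
      left_inv := fun _ => rfl
      right_inv := fun _ => rfl }
  rw [← Fintype.card_subtype, Fintype.card_congr e, Fintype.card_embedding_eq, Fintype.card_coe,
    hA, Fintype.card_fin, Nat.descFactorial_self]

theorem card_filter_embedding_map {m : ℕ} (P : Finset α → Prop) [DecidablePred P] :
    #{σ : Fin m ↪ α | P (univ.map σ)} = m.factorial * #{A ∈ univ.powersetCard m | P A} := by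
  rw [card_eq_sum_card_fiberwise (f := fun σ : Fin m ↪ α => univ.map σ)
    (t := {A ∈ univ.powersetCard m | P A}) fun σ hσ =>
      mem_filter.mpr ⟨mem_powersetCard.mpr ⟨subset_univ _, by simp⟩, by simpa using hσ⟩]
  rw [sum_congr rfl fun A hA => ?_, sum_const, smul_eq_mul, mul_comm]
  obtain ⟨hAm, hPA⟩ := mem_filter.mp hA
  rw [filter_filter, ← card_filter_embedding_map_eq (mem_powersetCard.mp hAm).2]
  congr 1
  exact filter_congr fun σ _ => ⟨And.right, fun h => ⟨h ▸ hPA, h⟩⟩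

end Urn

open scoped Classical in
theorem stmt18 (N m : ℕ) (hm : m ≤ 2 * N) (t : ℝ) (ht : 0 < t) :
    (((Finset.univ.filter fun σ : Fin m ↪ Fin (2 * N) =>
        t ≤ |((Finset.univ.filter fun k : Fin m => N ≤ (σ k).val).card : ℝ) - m / 2|).card : ℝ))
      / ((Finset.univ : Finset (Fin m ↪ Fin (2 * N))).card : ℝ)
    ≤ 2 * Real.exp (-2 * t ^ 2 / m) := by
  let T : Finset (Fin (2 * N)) := {i | N ≤ i.val}
  have hT : 2 * #T = Fintype.card (Fin (2 * N)) := by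
    have hsplit := card_filter_add_card_filter_not (s := univ) (fun i : Fin (2 * N) => i.val < N)
    simp only [Fin.card_filter_val_lt, not_lt, card_univ, Fintype.card_fin] at hsplit
    simp only [T, Fintype.card_fin]
    omega
  have hcount : ∀ σ : Fin m ↪ Fin (2 * N), #{k | N ≤ (σ k).val} = #(univ.map σ ∩ T) := by
    intro σ
    rw [← card_map σ, ← filter_mem_eq_inter, filter_map]
    congr 2
    ext k
    simp [T]
  rw [filter_congr fun σ _ => by rw [hcount σ],
    card_filter_embedding_map (fun A => t ≤ |(#(A ∩ T) : ℝ) - m / 2|), card_univ,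
    Fintype.card_embedding_eq, Fintype.card_fin, Fintype.card_fin,
    Nat.descFactorial_eq_factorial_mul_choose]
  have hbound := card_filter_powersetCard_abs_le_choose_mul_exp hT (by simpa using hm) ht.le
  rw [Fintype.card_fin] at hbound
  push_cast
  rw [mul_div_mul_left _ _ (by positivity), div_le_iff₀ (by exact_mod_cast Nat.choose_pos hm)]
  linarith
end
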